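/- Let d > 0, a > 0 and ρ be real, and let s ∈ ℂ satisfy Re(s) > 0 and Re(s)/2 − ρ > −1. Then the Mellin transform at s of the function z ↦ ∫₀^d t^{−ρ} e^{−a t − z t^{−1/2}} dt (defined for z > 0) equals Γ(s) · ∫₀^d t^{s/2 − ρ} e^{−a t} dt. -/

import Mathlib

/-!
By Fubini, the Mellin transform in `z` can be taken inside the `t`-integral. For fixed `t` the
integrand is `exp (-c z)` with `c = t ^ (-1/2)`, whose Mellin transform is `Γ(s) c ^ (-s)`, and
`c ^ (-s) = t ^ (s/2)`. Fubini applies because the same computation for the absolute value gives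
`Γ(Re s) t ^ (Re s/2 - ρ) e ^ (-a t)`, which is integrable on `(0, d]` as `Re s/2 - ρ > -1`.
-/

open MeasureTheory Set Complex

section ScaleMixture

variable {E : Type*} [NormedAddCommGroup E] [NormedSpace ℂ E] {f : ℝ → E} {s : ℂ}

lemma integral_norm_mellin_integrand_comp_mul_left (f : ℝ → E) (s : ℂ) {c : ℝ}
    (hc : 0 < c) :
    ∫ z in Ioi (0:ℝ), ‖(z : ℂ) ^ (s - 1) • f (c * z)‖
      = c ^ (-s.re) * ∫ z in Ioi (0:ℝ), ‖(z : ℂ) ^ (s - 1) • f z‖ := by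
  have hscale : ∀ z ∈ Ioi (0:ℝ), ‖((c * z : ℝ) : ℂ) ^ (s - 1) • f (c * z)‖
      = c ^ (s.re - 1) * ‖(z : ℂ) ^ (s - 1) • f (c * z)‖ := fun z hz => by
    simp only [norm_smul, norm_cpow_eq_rpow_re_of_pos (mul_pos hc hz),
      norm_cpow_eq_rpow_re_of_pos (mem_Ioi.mp hz), sub_re, one_re,
      Real.mul_rpow hc.le (mem_Ioi.mp hz).le, mul_assoc]
  have h := integral_comp_mul_left_Ioi (fun x : ℝ => ‖(x : ℂ) ^ (s - 1) • f x‖) 0 hc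
  rw [mul_zero, setIntegral_congr_fun measurableSet_Ioi hscale, integral_const_mul,
    smul_eq_mul, Real.rpow_sub_one hc.ne'] at h
  rw [Real.rpow_neg hc.le]
  field_simp at h ⊢
  exact h

variable {α : Type*} [MeasurableSpace α] {μ : Measure α} [SFinite μ]
  {g : α → ℂ} {c : α → ℝ}

lemma integrable_prod_mellin_integrand_smul_comp_mul (hf : MellinConvergent f s)
    (hf_meas : StronglyMeasurable f) (hg : AEStronglyMeasurable g μ) (hc_meas : Measurable c)
    (hc : ∀ᵐ t ∂μ, 0 < c t) (hgc : Integrable (fun t => ‖g t‖ * c t ^ (-s.re)) μ) :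
    Integrable (fun p : ℝ × α => (p.1 : ℂ) ^ (s - 1) • g p.2 • f (c p.2 * p.1))
      ((volume.restrict (Ioi 0)).prod μ) := by
  have hmeas : AEStronglyMeasurable
      (fun p : ℝ × α => (p.1 : ℂ) ^ (s - 1) • g p.2 • f (c p.2 * p.1))
      ((volume.restrict (Ioi 0)).prod μ) :=
    ((measurable_ofReal.pow_const _).comp measurable_fst).aestronglyMeasurable.smul
      (hg.comp_snd.smul (hf_meas.comp_measurable
        ((hc_meas.comp measurable_snd).mul measurable_fst)).aestronglyMeasurable)
  refine (integrable_prod_iff' hmeas).mpr ⟨?_, ?_⟩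
  · filter_upwards [hc] with t ht
    exact (((MellinConvergent.comp_mul_left ht).mpr hf).const_smul (g t))
  · refine (hgc.mul_const (∫ z in Ioi (0:ℝ), ‖(z : ℂ) ^ (s - 1) • f z‖)).congr ?_
    filter_upwards [hc] with t ht
    simp only [smul_comm _ (g t), norm_smul (g t), integral_const_mul,
      integral_norm_mellin_integrand_comp_mul_left f s ht, mul_assoc]

theorem mellin_integral_smul_comp_mul [CompleteSpace E] (hf : MellinConvergent f s)
    (hf_meas : StronglyMeasurable f) (hg : AEStronglyMeasurable g μ) (hc_meas : Measurable c)
    (hc : ∀ᵐ t ∂μ, 0 < c t) (hgc : Integrable (fun t => ‖g t‖ * c t ^ (-s.re)) μ) :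
    mellin (fun z => ∫ t, g t • f (c t * z) ∂μ) s
      = (∫ t, g t * (c t : ℂ) ^ (-s) ∂μ) • mellin f s := by
  calc mellin (fun z => ∫ t, g t • f (c t * z) ∂μ) s
      = ∫ z in Ioi (0:ℝ), ∫ t, (z : ℂ) ^ (s - 1) • g t • f (c t * z) ∂μ := by
        simp only [mellin, integral_smul]
    _ = ∫ t, (∫ z in Ioi (0:ℝ), (z : ℂ) ^ (s - 1) • g t • f (c t * z)) ∂μ :=
        integral_integral_swap
          (integrable_prod_mellin_integrand_smul_comp_mul hf hf_meas hg hc_meas hc hgc)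
    _ = ∫ t, (g t * (c t : ℂ) ^ (-s)) • mellin f s ∂μ := by
        refine integral_congr_ae ?_
        filter_upwards [hc] with t ht
        rw [← mellin, mellin_const_smul, mellin_comp_mul_left _ _ ht, smul_smul]
    _ = (∫ t, g t * (c t : ℂ) ^ (-s) ∂μ) • mellin f s := integral_smul_const _ _

lemma mellinConvergent_exp_neg (hs : 0 < s.re) :
    MellinConvergent (fun x : ℝ => (Real.exp (-x) : ℂ)) s := by
  simpa only [MellinConvergent, smul_eq_mul, mul_comm] using GammaIntegral_convergent hs

lemma mellin_exp_neg (hs : 0 < s.re) :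
    mellin (fun x : ℝ => (Real.exp (-x) : ℂ)) s = Gamma s := by
  rw [← GammaIntegral_eq_mellin, Gamma_eq_integral hs]

theorem mellin_integral_mul_exp_neg_mul (hs : 0 < s.re) (hg : AEStronglyMeasurable g μ)
    (hc_meas : Measurable c) (hc : ∀ᵐ t ∂μ, 0 < c t)
    (hgc : Integrable (fun t => ‖g t‖ * c t ^ (-s.re)) μ) :
    mellin (fun z => ∫ t, g t * Real.exp (-(c t * z)) ∂μ) s
      = Gamma s * ∫ t, g t * (c t : ℂ) ^ (-s) ∂μ := by
  rw [mul_comm, ← mellin_exp_neg hs, ← smul_eq_mul]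
  exact mellin_integral_smul_comp_mul (mellinConvergent_exp_neg hs)
    (by fun_prop) hg hc_meas hc hgc

end ScaleMixture

lemma integrableOn_Ioc_rpow_mul_exp_neg_mul (a d : ℝ) {r : ℝ} (hr : -1 < r) :
    IntegrableOn (fun t : ℝ => t ^ r * Real.exp (-a * t)) (Ioc 0 d) :=
  ((intervalIntegral.intervalIntegrable_rpow' hr).mul_continuousOn
    (by fun_prop)).def'.mono_set Ioc_subset_uIoc

theorem stmt15_general (d a ρ : ℝ) (s : ℂ)
    (hs : 0 < s.re) (hsρ : -1 < s.re / 2 - ρ) :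
    mellin (fun z : ℝ =>
        ((∫ t in Set.Ioc (0:ℝ) d, t ^ (-ρ) * Real.exp (-a * t - z * t ^ (-(1:ℝ)/2)) : ℝ) : ℂ)) s
      = Complex.Gamma s *
          ∫ t in Set.Ioc (0:ℝ) d, (t : ℂ) ^ (s / 2 - (ρ : ℂ)) * (Real.exp (-a * t) : ℂ) := by
  have hsplit : ∀ z t : ℝ, t ^ (-ρ) * Real.exp (-a * t - z * t ^ (-(1:ℝ)/2))
      = t ^ (-ρ) * Real.exp (-a * t) * Real.exp (-(t ^ (-(1:ℝ)/2) * z)) := fun z t => by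
    rw [mul_assoc, ← Real.exp_add]; ring_nf
  simp only [hsplit, ← integral_complex_ofReal, ofReal_mul]
  rw [mellin_integral_mul_exp_neg_mul hs (by fun_prop) (by fun_prop)
    ((ae_restrict_mem measurableSet_Ioc).mono fun t ht => Real.rpow_pos_of_pos ht.1 _) ?_]
  · refine congrArg _ (setIntegral_congr_fun measurableSet_Ioc fun t ht => ?_)
    rw [← cpow_mul_ofReal_nonneg ht.1.le, ofReal_cpow ht.1.le, mul_right_comm,
      ← cpow_add _ _ (ofReal_ne_zero.mpr ht.1.ne')]
    push_cast
    ring_nf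
  · refine (integrableOn_Ioc_rpow_mul_exp_neg_mul a d hsρ).congr_fun (fun t ht => ?_)
      measurableSet_Ioc
    rw [← ofReal_mul, norm_real,
      Real.norm_of_nonneg (mul_nonneg (Real.rpow_nonneg ht.1.le _) (Real.exp_nonneg _)),
      ← Real.rpow_mul ht.1.le, mul_right_comm, ← Real.rpow_add ht.1]
    ring_nf

theorem stmt15 (d a ρ : ℝ) (hd : 0 < d) (ha : 0 < a) (s : ℂ)
    (hs : 0 < s.re) (hsρ : -1 < s.re / 2 - ρ) :
    mellin (fun z : ℝ =>
        ((∫ t in Set.Ioc (0:ℝ) d, t ^ (-ρ) * Real.exp (-a * t - z * t ^ (-(1:ℝ)/2)) : ℝ) : ℂ)) s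
      = Complex.Gamma s *
          ∫ t in Set.Ioc (0:ℝ) d, (t : ℂ) ^ (s / 2 - (ρ : ℂ)) * (Real.exp (-a * t) : ℂ) :=
  stmt15_general d a ρ s hs hsρ
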